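/- Let 𝒳, 𝒴 be nonempty finite alphabets with |𝒴| ≥ 2, let η ∈ (0, 1/(2|𝒴|)) and κ ∈ (0,2]. Let W and Ŵ be discrete memoryless channels from 𝒳 to 𝒴 such that d_TV(Ŵ(·|x), W(·|x)) ≤ κ for every x ∈ 𝒳. Then the capacities (in dual minimax form) satisfy |C(Ŵ) − C(W)| ≤ 4η|𝒴| + (κ/2)·log(2e|𝒴|/(η²κ)). -/

import Mathlib

/-- A probability distribution on a finite alphabet. -/
def IsDist {𝒴 : Type*} [Fintype 𝒴] (P : 𝒴 → ℝ) : Prop :=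
  (∀ y, 0 ≤ P y) ∧ ∑ y, P y = 1

/-- Total variation distance (unnormalized ℓ₁ distance, valued in [0,2]). -/
noncomputable def dTV {𝒴 : Type*} [Fintype 𝒴] (P Q : 𝒴 → ℝ) : ℝ :=
  ∑ y, |P y - Q y|

/-- The Kullback–Leibler divergence, valued in `EReal`: it equals the real sum
`∑ y, P y * log (P y / Q y)` (with the convention `0 · log (0/q) = 0`) when
`P ≪ Q`, and `+∞` if `P y > 0 = Q y` for some `y`. -/
noncomputable def klE {𝒴 : Type*} [Fintype 𝒴] (P Q : 𝒴 → ℝ) : EReal :=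
  if ∀ y, Q y = 0 → P y = 0 then ((∑ y, P y * Real.log (P y / Q y) : ℝ) : EReal) else ⊤

/-- The capacity of a DMC in the Csiszár–Kemperman dual (minimax) form:
`C(W) = min_{Q ∈ 𝒫(𝒴)} max_{x ∈ 𝒳} D(W(·|x) ‖ Q)`; it is a finite real number
for any channel, recovered via `EReal.toReal`. -/
noncomputable def capE {𝒳 𝒴 : Type*} [Fintype 𝒳] [Fintype 𝒴] (W : 𝒳 → 𝒴 → ℝ) : EReal :=
  ⨅ (Q : 𝒴 → ℝ) (_ : IsDist Q), ⨆ x : 𝒳, klE (W x) Q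

/-- Real-valued capacity. -/
noncomputable def capR {𝒳 𝒴 : Type*} [Fintype 𝒳] [Fintype 𝒴] (W : 𝒳 → 𝒴 → ℝ) : ℝ :=
  (capE W).toReal

/-! Take an output distribution `Q` that is nearly optimal for `W`. Mixing it with the uniform
distribution, `Q' = (1 - η|𝒴|) Q + η`, costs at most `-log (1 - η|𝒴|) ≤ 2η|𝒴|` in every
divergence `D(W(·|x) ‖ ·)` and makes `Q' ≥ η`. Against such a `Q'` the divergence is stable under
a total-variation perturbation of size `κ`: the entropies differ by at most
`κ/2 · (1 + log (2|𝒴|/κ))`, and the cross term `∑ (W - Ŵ) log Q'` by at most `κ/2 · log (1/η)`.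
Altogether `C(Ŵ) ≤ C(W) + 2η|𝒴| + κ/2 · log (2e|𝒴|/(κη))`, and the roles of `W` and `Ŵ` are
symmetric. -/

open Real Finset

lemma mul_log_div_eq {p q : ℝ} (hq : q ≠ 0) : p * log (p / q) = p * log p - p * log q := by
  rcases eq_or_ne p 0 with rfl | hp
  · simp
  · rw [log_div hp hq, mul_sub]

lemma sub_le_mul_log_div {p q : ℝ} (hp : 0 ≤ p) (hq : 0 ≤ q) (hpq : q = 0 → p = 0) :
    p - q ≤ p * log (p / q) := by
  rcases hq.eq_or_lt with rfl | hq
  · simp [hpq rfl]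
  · have h := mul_le_mul_of_nonneg_left (self_sub_one_le_mul_log (div_nonneg hp hq.le)) hq.le
    calc p - q = q * (p / q - 1) := by field_simp
      _ ≤ q * (p / q * log (p / q)) := h
      _ = p * log (p / q) := by field_simp

lemma mul_log_add_sub_mul_log_le {p d : ℝ} (hp : 0 ≤ p) (hd : 0 ≤ d) (hpd : p + d ≤ 1) :
    (p + d) * log (p + d) - p * log p ≤ d := by
  have hgibbs := sub_le_mul_log_div hp (add_nonneg hp hd) fun h => by linarith
  rcases (add_nonneg hp hd).eq_or_lt with h0 | h0
  · obtain rfl : p = 0 := by linarith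
    obtain rfl : d = 0 := by linarith
    simp
  rw [mul_log_div_eq h0.ne'] at hgibbs
  have : d * log (p + d) ≤ 0 := mul_nonpos_of_nonneg_of_nonpos hd (log_nonpos h0.le hpd)
  linarith

lemma mul_log_add_mul_log_le {p q : ℝ} (hp : 0 ≤ p) (hq : 0 ≤ q) :
    p * log p + q * log q ≤ (p + q) * log (p + q) := by
  have mono : ∀ {a b : ℝ}, 0 ≤ a → 0 ≤ b → a * log a ≤ a * log (a + b) := fun {a b} ha hb => by
    rcases ha.eq_or_lt with rfl | ha
    · simp
    · exact mul_le_mul_of_nonneg_left (log_le_log ha (by linarith)) ha.le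
  have := mono hq hp
  rw [add_comm q p] at this
  linarith [mono hp hq]

lemma mul_log_sub_mul_log_le {p p' : ℝ} (hp : 0 ≤ p) (hp' : 0 ≤ p') (hp'1 : p' ≤ 1) :
    p' * log p' - p * log p ≤ (p' - p)⁺ + negMulLog (p' - p)⁻ := by
  rcases le_total p p' with h | h
  · rw [posPart_eq_self.mpr (sub_nonneg.mpr h), negPart_eq_zero.mpr (sub_nonneg.mpr h),
      negMulLog_zero, add_zero]
    simpa using mul_log_add_sub_mul_log_le hp (sub_nonneg.mpr h) (by linarith)
  · rw [posPart_eq_zero.mpr (sub_nonpos.mpr h), negPart_eq_neg.mpr (sub_nonpos.mpr h),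
      zero_add, neg_sub, negMulLog]
    have := mul_log_add_mul_log_le hp' (sub_nonneg.mpr h)
    rw [add_sub_cancel] at this
    linarith

lemma negMulLog_le {b s : ℝ} (hb : 0 ≤ b) (hs : 0 < s) : negMulLog b ≤ b * (-log s - 1) + s := by
  have := sub_le_mul_log_div hb hs.le fun h => absurd h hs.ne'
  rw [mul_log_div_eq hs.ne'] at this
  rw [negMulLog]
  linarith

lemma neg_log_one_sub_le {t : ℝ} (ht0 : 0 ≤ t) (ht : t ≤ 1 / 2) : -log (1 - t) ≤ 2 * t := by
  have h := one_sub_inv_le_log_of_pos (show 0 < 1 - t by linarith)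
  have : (1 - t)⁻¹ - 1 ≤ 2 * t := by
    rw [inv_eq_one_div, div_sub_one (by linarith), div_le_iff₀ (by linarith)]
    nlinarith
  linarith

section Distributions

variable {𝒴 : Type*} [Fintype 𝒴]

lemma IsDist.le_one {P : 𝒴 → ℝ} (hP : IsDist P) (y : 𝒴) : P y ≤ 1 :=
  hP.2 ▸ single_le_sum (fun i _ => hP.1 i) (mem_univ y)

lemma IsDist.nonempty {P : 𝒴 → ℝ} (hP : IsDist P) : Nonempty 𝒴 := by
  by_contra h
  have := hP.2
  simp [univ_eq_empty_iff.mpr (not_nonempty_iff.mp h)] at this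

lemma isDist_uniform [Nonempty 𝒴] : IsDist fun _ : 𝒴 => (Fintype.card 𝒴 : ℝ)⁻¹ :=
  ⟨fun _ => by positivity, by simp⟩

lemma dTV_comm (P Q : 𝒴 → ℝ) : dTV P Q = dTV Q P := by
  simp only [dTV, abs_sub_comm]

lemma sum_negPart_sub_eq_sum_posPart_sub {P P' : 𝒴 → ℝ} (hP : IsDist P) (hP' : IsDist P') :
    ∑ y, (P' y - P y)⁻ = ∑ y, (P' y - P y)⁺ := by
  have h : ∑ y, ((P' y - P y)⁺ - (P' y - P y)⁻) = 0 := by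
    simp only [posPart_sub_negPart, sum_sub_distrib, hP.2, hP'.2, sub_self]
  rw [sum_sub_distrib] at h
  linarith

lemma two_mul_sum_posPart_sub_eq_dTV {P P' : 𝒴 → ℝ} (hP : IsDist P) (hP' : IsDist P') :
    2 * ∑ y, (P' y - P y)⁺ = dTV P' P := by
  simp only [dTV, ← posPart_add_negPart, sum_add_distrib,
    sum_negPart_sub_eq_sum_posPart_sub hP hP']
  ring

noncomputable def smoothDist (η : ℝ) (Q : 𝒴 → ℝ) : 𝒴 → ℝ :=
  fun y => (1 - η * Fintype.card 𝒴) * Q y + η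

lemma IsDist.smoothDist {Q : 𝒴 → ℝ} (hQ : IsDist Q) {η : ℝ} (hη0 : 0 ≤ η)
    (hη1 : η * Fintype.card 𝒴 ≤ 1) : IsDist (smoothDist η Q) := by
  refine ⟨fun y => add_nonneg (mul_nonneg (sub_nonneg.mpr hη1) (hQ.1 y)) hη0, ?_⟩
  simp only [_root_.smoothDist, sum_add_distrib, ← mul_sum, hQ.2, sum_const, card_univ,
    nsmul_eq_mul]
  ring

end Distributions

section KullbackLeibler

variable {𝒴 : Type*} [Fintype 𝒴]

noncomputable def klR (P Q : 𝒴 → ℝ) : ℝ :=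
  ∑ y, P y * log (P y / Q y)

lemma klE_eq_klR {P Q : 𝒴 → ℝ} (hPQ : ∀ y, Q y = 0 → P y = 0) : klE P Q = klR P Q :=
  if_pos hPQ

lemma klR_nonneg {P Q : 𝒴 → ℝ} (hP : IsDist P) (hQ : IsDist Q)
    (hPQ : ∀ y, Q y = 0 → P y = 0) : 0 ≤ klR P Q := by
  have h : ∑ y, (P y - Q y) ≤ klR P Q :=
    sum_le_sum fun y _ => sub_le_mul_log_div (hP.1 y) (hQ.1 y) (hPQ y)
  rwa [sum_sub_distrib, hP.2, hQ.2, sub_self] at h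

lemma klE_nonneg {P Q : 𝒴 → ℝ} (hP : IsDist P) (hQ : IsDist Q) : 0 ≤ klE P Q := by
  by_cases hPQ : ∀ y, Q y = 0 → P y = 0
  · rw [klE_eq_klR hPQ]
    exact EReal.coe_nonneg.mpr (klR_nonneg hP hQ hPQ)
  · rw [klE, if_neg hPQ]
    exact le_top

lemma klR_eq_sum_sub_sum {P Q : 𝒴 → ℝ} (hQ : ∀ y, Q y ≠ 0) :
    klR P Q = ∑ y, P y * log (P y) - ∑ y, P y * log (Q y) := by
  simp only [klR, mul_log_div_eq (hQ _), sum_sub_distrib]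

lemma klR_le_of_mul_le {P Q Q' : 𝒴 → ℝ} {a : ℝ} (ha : 0 < a) (hP : IsDist P)
    (hQ : ∀ y, 0 ≤ Q y) (hPQ : ∀ y, Q y = 0 → P y = 0) (hQQ' : ∀ y, a * Q y ≤ Q' y) :
    klR P Q' ≤ klR P Q - log a := by
  have hterm : ∀ y, P y * log (P y / Q' y) ≤ P y * log (P y / Q y) - P y * log a := by
    intro y
    rcases (hP.1 y).eq_or_lt with h0 | h0
    · simp [← h0]
    have hQy : 0 < Q y := (hQ y).lt_of_ne fun h => h0.ne' (hPQ y h.symm)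
    have hlog : log (P y / Q' y) ≤ log (P y / Q y) - log a := by
      rw [← log_div (by positivity) ha.ne', div_div, mul_comm]
      exact log_le_log (div_pos h0 ((mul_pos ha hQy).trans_le (hQQ' y))) <|
        div_le_div_of_nonneg_left h0.le (by positivity) (hQQ' y)
    have := mul_le_mul_of_nonneg_left hlog h0.le
    linarith
  calc klR P Q' ≤ ∑ y, (P y * log (P y / Q y) - P y * log a) := sum_le_sum fun y _ => hterm y
    _ = klR P Q - log a := by rw [sum_sub_distrib, ← sum_mul, hP.2, one_mul, klR]

end KullbackLeibler

section Perturbation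

variable {𝒴 : Type*} [Fintype 𝒴]

lemma sum_mul_log_sub_sum_mul_log_le {P P' : 𝒴 → ℝ} (hP : IsDist P) (hP' : IsDist P')
    {c : ℝ} (hc : 0 < c) :
    ∑ y, P' y * log (P' y) - ∑ y, P y * log (P y) ≤
      c + (∑ y, (P' y - P y)⁺) * log (Fintype.card 𝒴 / c) := by
  have := hP.nonempty
  have hn : (0 : ℝ) < Fintype.card 𝒴 := by exact_mod_cast Fintype.card_pos
  set T := ∑ y, (P' y - P y)⁺
  -- Comparing each `negMulLog` with the tangent line at `c / |𝒴|` bounds the entropy of the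
  -- negative parts, whose total mass is `T`.
  have hneg : ∑ y, negMulLog (P' y - P y)⁻ ≤ T * (log (Fintype.card 𝒴 / c) - 1) + c := by
    calc ∑ y, negMulLog (P' y - P y)⁻
        ≤ ∑ y, ((P' y - P y)⁻ * (-log (c / Fintype.card 𝒴) - 1) + c / Fintype.card 𝒴) :=
          sum_le_sum fun y _ => negMulLog_le (negPart_nonneg _) (by positivity)
      _ = T * (log (Fintype.card 𝒴 / c) - 1) + c := by
          rw [sum_add_distrib, ← sum_mul, sum_negPart_sub_eq_sum_posPart_sub hP hP', sum_const,
            card_univ, nsmul_eq_mul, mul_div_cancel₀ _ hn.ne', ← log_inv, inv_div]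
  calc ∑ y, P' y * log (P' y) - ∑ y, P y * log (P y)
      = ∑ y, (P' y * log (P' y) - P y * log (P y)) := (sum_sub_distrib ..).symm
    _ ≤ ∑ y, ((P' y - P y)⁺ + negMulLog (P' y - P y)⁻) :=
        sum_le_sum fun y _ => mul_log_sub_mul_log_le (hP.1 y) (hP'.1 y) (hP'.le_one y)
    _ ≤ c + T * log (Fintype.card 𝒴 / c) := by
        rw [sum_add_distrib]
        linarith

lemma sum_sub_mul_log_le {P P' Q : 𝒴 → ℝ} {η : ℝ} (hη : 0 < η) (hQη : ∀ y, η ≤ Q y)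
    (hQ1 : ∀ y, Q y ≤ 1) :
    ∑ y, (P y - P' y) * log (Q y) ≤ (∑ y, (P' y - P y)⁺) * -log η := by
  rw [sum_mul]
  refine sum_le_sum fun y _ => ?_
  have hQ0 : 0 < Q y := hη.trans_le (hQη y)
  have hpos : (P' y - P y)⁺ * log η ≤ (P' y - P y)⁺ * log (Q y) :=
    mul_le_mul_of_nonneg_left (log_le_log hη (hQη y)) (posPart_nonneg _)
  have hneg : (P' y - P y)⁻ * log (Q y) ≤ 0 :=
    mul_nonpos_of_nonneg_of_nonpos (negPart_nonneg _) (log_nonpos hQ0.le (hQ1 y))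
  have hsplit : P y - P' y = (P' y - P y)⁻ - (P' y - P y)⁺ := by
    linarith [posPart_sub_negPart (P' y - P y)]
  rw [hsplit]
  linarith

lemma klR_le_add_of_dTV_le {P P' Q : 𝒴 → ℝ} {η κ : ℝ} (hP : IsDist P) (hP' : IsDist P')
    (hQ : IsDist Q) (hη : 0 < η) (hQη : ∀ y, η ≤ Q y) (hκ0 : 0 < κ) (hκ2 : κ ≤ 2)
    (hTV : dTV P' P ≤ κ) :
    klR P' Q ≤ klR P Q + κ / 2 * log (2 * exp 1 * Fintype.card 𝒴 / (κ * η)) := by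
  have := hP.nonempty
  have hn : (1 : ℝ) ≤ Fintype.card 𝒴 := by exact_mod_cast Fintype.card_pos
  have hη1 : η ≤ 1 := (hQη (Classical.arbitrary 𝒴)).trans (hQ.le_one _)
  set T := ∑ y, (P' y - P y)⁺
  have hTκ : T ≤ κ / 2 := by linarith [two_mul_sum_posPart_sub_eq_dTV hP hP']
  have hent := sum_mul_log_sub_sum_mul_log_le hP hP' (half_pos hκ0)
  have hcross := sum_sub_mul_log_le (P := P) (P' := P') hη hQη hQ.le_one
  have hL : 0 ≤ log (Fintype.card 𝒴 / (κ / 2)) + -log η := by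
    have h1 : 0 ≤ log (Fintype.card 𝒴 / (κ / 2)) :=
      log_nonneg ((one_le_div (by positivity)).mpr (by linarith))
    linarith [log_nonpos hη.le hη1]
  have hlog : log (2 * exp 1 * Fintype.card 𝒴 / (κ * η)) =
      1 + (log (Fintype.card 𝒴 / (κ / 2)) + -log η) := by
    rw [show 2 * exp 1 * Fintype.card 𝒴 / (κ * η) = exp 1 * (Fintype.card 𝒴 / (κ / 2) / η) by
        field_simp, log_mul (exp_pos 1).ne' (by positivity), log_exp, log_div (by positivity)
        hη.ne']
    ring
  have hdiff : klR P' Q - klR P Q =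
      ∑ y, P' y * log (P' y) - ∑ y, P y * log (P y) + ∑ y, (P y - P' y) * log (Q y) := by
    have hQ0 : ∀ y, Q y ≠ 0 := fun y => (hη.trans_le (hQη y)).ne'
    simp only [klR_eq_sum_sub_sum hQ0, sub_mul, sum_sub_distrib]
    ring
  rw [hlog]
  linarith [mul_le_mul_of_nonneg_right hTκ hL]

end Perturbation

section Capacity

variable {𝒳 𝒴 : Type*} [Fintype 𝒳] [Fintype 𝒴]

lemma capE_nonneg [Nonempty 𝒳] {W : 𝒳 → 𝒴 → ℝ} (hW : ∀ x, IsDist (W x)) : 0 ≤ capE W :=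
  le_iInf₂ fun Q hQ =>
    (klE_nonneg (hW (Classical.arbitrary 𝒳)) hQ).trans (le_iSup (fun x => klE (W x) Q) _)

lemma capE_le_log_card [Nonempty 𝒴] {W : 𝒳 → 𝒴 → ℝ} (hW : ∀ x, IsDist (W x)) :
    capE W ≤ (log (Fintype.card 𝒴) : ℝ) := by
  have hn : (0 : ℝ) < Fintype.card 𝒴 := by exact_mod_cast Fintype.card_pos
  refine (iInf₂_le _ isDist_uniform).trans (iSup_le fun x => ?_)
  rw [klE_eq_klR fun y h => absurd h (by positivity), EReal.coe_le_coe_iff,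
    klR_eq_sum_sub_sum fun y => by positivity]
  have hent : ∑ y, W x y * log (W x y) ≤ 0 :=
    sum_nonpos fun y _ => mul_log_nonpos ((hW x).1 y) ((hW x).le_one y)
  simp only [log_inv, ← sum_mul, (hW x).2]
  linarith

lemma exists_klR_lt_of_capE_lt {W : 𝒳 → 𝒴 → ℝ} {r : ℝ} (h : capE W < r) :
    ∃ Q, IsDist Q ∧ (∀ x y, Q y = 0 → W x y = 0) ∧ ∀ x, klR (W x) Q < r := by
  obtain ⟨Q, hQ⟩ := iInf_lt_iff.mp h
  obtain ⟨hQd, hQ⟩ := iInf_lt_iff.mp hQ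
  have hx : ∀ x, klE (W x) Q < r := fun x => (le_iSup (fun x => klE (W x) Q) x).trans_lt hQ
  have hac : ∀ x y, Q y = 0 → W x y = 0 := by
    intro x
    by_contra hPQ
    simpa [klE, if_neg hPQ] using hx x
  refine ⟨Q, hQd, hac, fun x => ?_⟩
  simpa [klE_eq_klR (hac x)] using hx x

lemma capR_le_add_of_forall [Nonempty 𝒳] {V W : 𝒳 → 𝒴 → ℝ} (hV : ∀ x, IsDist (V x))
    (hW : ∀ x, IsDist (W x)) {δ : ℝ}
    (h : ∀ Q, IsDist Q → (∀ x y, Q y = 0 → W x y = 0) →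
      ∃ Q', IsDist Q' ∧ ∀ x, klE (V x) Q' ≤ ((klR (W x) Q + δ : ℝ) : EReal)) :
    capR V ≤ capR W + δ := by
  have := (hW (Classical.arbitrary 𝒳)).nonempty
  have hW_top : capE W ≠ ⊤ := ne_top_of_le_ne_top (EReal.coe_ne_top _) (capE_le_log_card hW)
  have hW_bot : capE W ≠ ⊥ := ne_bot_of_le_ne_bot EReal.zero_ne_bot (capE_nonneg hW)
  refine le_of_forall_pos_le_add fun ε hε => ?_
  have hlt : capE W < ((capR W + ε : ℝ) : EReal) := by
    rw [← EReal.coe_toReal hW_top hW_bot, EReal.coe_lt_coe_iff]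
    exact lt_add_of_pos_right _ hε
  obtain ⟨Q, hQ, hac, hQlt⟩ := exists_klR_lt_of_capE_lt hlt
  obtain ⟨Q', hQ', hQ'le⟩ := h Q hQ hac
  have hcapV : capE V ≤ ((capR W + ε + δ : ℝ) : EReal) :=
    (iInf₂_le Q' hQ').trans <| iSup_le fun x =>
      (hQ'le x).trans (EReal.coe_le_coe_iff.mpr (by linarith [hQlt x]))
  have := EReal.toReal_le_toReal hcapV (ne_bot_of_le_ne_bot EReal.zero_ne_bot (capE_nonneg hV))
    (EReal.coe_ne_top _)
  rw [EReal.toReal_coe] at this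
  exact this.trans_eq (by ring)

end Capacity

lemma capR_le_add_of_dTV_le {𝒳 𝒴 : Type*} [Fintype 𝒳] [Nonempty 𝒳] [Fintype 𝒴] {η κ : ℝ}
    (hη0 : 0 < η) (hη1 : η < 1 / (2 * Fintype.card 𝒴)) (hκ0 : 0 < κ) (hκ2 : κ ≤ 2)
    {W W' : 𝒳 → 𝒴 → ℝ} (hW : ∀ x, IsDist (W x)) (hW' : ∀ x, IsDist (W' x))
    (hTV : ∀ x, dTV (W' x) (W x) ≤ κ) :
    capR W' ≤ capR W + (4 * η * Fintype.card 𝒴 +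
      κ / 2 * log (2 * exp 1 * Fintype.card 𝒴 / (η ^ 2 * κ))) := by
  have := (hW (Classical.arbitrary 𝒳)).nonempty
  have hn : (1 : ℝ) ≤ Fintype.card 𝒴 := by exact_mod_cast Fintype.card_pos
  have ht : η * Fintype.card 𝒴 < 1 / 2 := by
    rw [lt_div_iff₀ (by positivity)] at hη1
    linarith
  have hη_le_one : η ≤ 1 := by nlinarith
  have hlog : κ / 2 * log (2 * exp 1 * Fintype.card 𝒴 / (κ * η)) ≤
      κ / 2 * log (2 * exp 1 * Fintype.card 𝒴 / (η ^ 2 * κ)) := by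
    refine mul_le_mul_of_nonneg_left (log_le_log (by positivity) ?_) (by positivity)
    have : η ^ 2 * κ ≤ κ * η := by nlinarith [mul_le_mul_of_nonneg_left hη_le_one hκ0.le]
    exact div_le_div_of_nonneg_left (by positivity) (by positivity) this
  have hQ' : ∀ Q, IsDist Q → IsDist (smoothDist η Q) := fun Q hQ =>
    hQ.smoothDist hη0.le (by linarith)
  refine capR_le_add_of_forall hW' hW fun Q hQ hac => ⟨smoothDist η Q, hQ' Q hQ, fun x => ?_⟩
  have hQ'η : ∀ y, η ≤ smoothDist η Q y := fun y =>
    le_add_of_nonneg_left (mul_nonneg (by linarith) (hQ.1 y))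
  rw [klE_eq_klR fun y h => absurd h (hη0.trans_le (hQ'η y)).ne', EReal.coe_le_coe_iff]
  have hpert := klR_le_add_of_dTV_le (hW x) (hW' x) (hQ' Q hQ) hη0 hQ'η hκ0 hκ2 (hTV x)
  have hsmooth := klR_le_of_mul_le (Q' := smoothDist η Q) (by linarith) (hW x) hQ.1 (hac x)
    fun y => le_add_of_nonneg_right hη0.le
  have ht0 : 0 ≤ η * Fintype.card 𝒴 := by positivity
  linarith [neg_log_one_sub_le ht0 ht.le]

theorem stmt_6_general {𝒳 𝒴 : Type*} [Fintype 𝒳] [Nonempty 𝒳] [Fintype 𝒴]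
    (η κ : ℝ) (hη0 : 0 < η) (hη1 : η < 1 / (2 * Fintype.card 𝒴))
    (hκ0 : 0 < κ) (hκ2 : κ ≤ 2)
    (W What : 𝒳 → 𝒴 → ℝ) (hW : ∀ x, IsDist (W x)) (hWhat : ∀ x, IsDist (What x))
    (hTV : ∀ x, dTV (What x) (W x) ≤ κ) :
    |capR What - capR W| ≤
      4 * η * Fintype.card 𝒴 +
        κ / 2 * Real.log (2 * Real.exp 1 * Fintype.card 𝒴 / (η ^ 2 * κ)) := by
  rw [abs_sub_le_iff]
  constructor
  · linarith [capR_le_add_of_dTV_le hη0 hη1 hκ0 hκ2 hW hWhat hTV]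
  · have hTV' : ∀ x, dTV (W x) (What x) ≤ κ := fun x => (dTV_comm _ _).trans_le (hTV x)
    linarith [capR_le_add_of_dTV_le hη0 hη1 hκ0 hκ2 hWhat hW hTV']

/-- `|C(Ŵ) − C(W)| ≤ 4η|𝒴| + (κ/2)·log(2e|𝒴|/(η²κ))` for channels
with per-input total-variation distance at most `κ` and `η ∈ (0,1/(2|𝒴|))`. -/
theorem stmt_6 {𝒳 𝒴 : Type*} [Fintype 𝒳] [Nonempty 𝒳] [Fintype 𝒴]
    (h𝒴 : 2 ≤ Fintype.card 𝒴)
    (η κ : ℝ) (hη0 : 0 < η) (hη1 : η < 1 / (2 * Fintype.card 𝒴))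
    (hκ0 : 0 < κ) (hκ2 : κ ≤ 2)
    (W What : 𝒳 → 𝒴 → ℝ) (hW : ∀ x, IsDist (W x)) (hWhat : ∀ x, IsDist (What x))
    (hTV : ∀ x, dTV (What x) (W x) ≤ κ) :
    |capR What - capR W| ≤
      4 * η * Fintype.card 𝒴 +
        κ / 2 * Real.log (2 * Real.exp 1 * Fintype.card 𝒴 / (η ^ 2 * κ)) :=
  stmt_6_general η κ hη0 hη1 hκ0 hκ2 W What hW hWhat hTV
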